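/- Each of the operators prefix_a, timeout, extchoice, par_{A,B} and hide_A on sets of availability traces is Scott-continuous: it preserves unions of nonempty ⊆-directed families of sets in each argument separately (with the other arguments, if any, held fixed). -/
import Mathlib


/-- An availability action over the alphabet `E`: `Sum.inl a` is an ordinary event `a ∈ Σ`,
and `Sum.inr a` is the offer `◎a` of the event `a ∈ Σ`. -/
abbrev Act (E : Type*) := E ⊕ E

variable {E : Type*}

/-- The semantics of prefixing `a → ·`: `prefixA a T` consists of all finite lists of offers
`◎a`, together with all traces `s ++ [a] ++ t` where `s` is a list of offers `◎a` and `t ∈ T`. -/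
def prefixA (a : E) (T : Set (List (Act E))) : Set (List (Act E)) :=
  {s | ∀ x ∈ s, x = (Sum.inr a : Act E)} ∪
  {u | ∃ s t, (∀ x ∈ s, x = (Sum.inr a : Act E)) ∧ t ∈ T ∧ u = s ++ [Sum.inl a] ++ t}

/-- A trace contains no ordinary events (only offers). -/
def NoEvents (s : List (Act E)) : Prop := ∀ x ∈ s, ∃ a : E, x = Sum.inr a

/-- The semantics of timeout (sliding choice): `timeoutOp T U = T ∪
{ s ++ u : s ∈ T contains no ordinary events, u ∈ U }`. -/
def timeoutOp (T U : Set (List (Act E))) : Set (List (Act E)) :=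
  T ∪ {v | ∃ s u, s ∈ T ∧ NoEvents s ∧ u ∈ U ∧ v = s ++ u}

/-- `Shuffle s t u` holds iff `u` is an interleaving of `s` and `t`. -/
inductive Shuffle {α : Type*} : List α → List α → List α → Prop
  | nil : Shuffle [] [] []
  | left {x : α} {s t u} : Shuffle s t u → Shuffle (x :: s) t (x :: u)
  | right {x : α} {s t u} : Shuffle s t u → Shuffle s (x :: t) (x :: u)

/-- The semantics of external choice: before the first ordinary event, offers of both sides
are interleaved; once a side performs an ordinary event, the other side is turned off. -/
def extchoice (T U : Set (List (Act E))) : Set (List (Act E)) :=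
  {tr | ∃ s ∈ T, ∃ t ∈ U, NoEvents s ∧ NoEvents t ∧ Shuffle s t tr} ∪
  {v | ∃ (a : E) (s s' t tr : List (Act E)),
      s ++ [Sum.inl a] ++ s' ∈ T ∧ NoEvents s ∧ t ∈ U ∧ NoEvents t ∧
      Shuffle s t tr ∧ v = tr ++ [Sum.inl a] ++ s'} ∪
  {v | ∃ (a : E) (t t' s tr : List (Act E)),
      t ++ [Sum.inl a] ++ t' ∈ U ∧ NoEvents t ∧ s ∈ T ∧ NoEvents s ∧
      Shuffle s t tr ∧ v = tr ++ [Sum.inl a] ++ t'}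

/-- `X† = { a : a ∈ X } ∪ { ◎a : a ∈ X }`. -/
def dagger (X : Set E) : Set (Act E) :=
  {x | ∃ a ∈ X, x = Sum.inl a ∨ x = Sum.inr a}

/-- `SyncMerge Y s t u` holds iff `u` is a synchronised merge of `s` and `t` on the
set `Y` of actions: actions in `Y` are contributed simultaneously by both traces, actions
outside `Y` by exactly one trace, interleaved in all possible ways. -/
inductive SyncMerge {α : Type*} (Y : Set α) : List α → List α → List α → Prop
  | nil : SyncMerge Y [] [] []
  | sync {x : α} {s t u} : x ∈ Y → SyncMerge Y s t u → SyncMerge Y (x :: s) (x :: t) (x :: u)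
  | left {x : α} {s t u} : x ∉ Y → SyncMerge Y s t u → SyncMerge Y (x :: s) t (x :: u)
  | right {x : α} {s t u} : x ∉ Y → SyncMerge Y s t u → SyncMerge Y s (x :: t) (x :: u)

/-- The semantics of the alphabetised parallel composition `P [A‖B] Q`. -/
def par (A B : Set E) (T U : Set (List (Act E))) : Set (List (Act E)) :=
  {tr | ∃ s ∈ T, ∃ t ∈ U, (∀ x ∈ s, x ∈ dagger A) ∧ (∀ x ∈ t, x ∈ dagger B) ∧
    SyncMerge (dagger (A ∩ B)) s t tr}

open Classical in
/-- `hideTr A tr` is `tr \ A`: the trace `tr` with all ordinary events belonging to `A`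
removed. -/
noncomputable def hideTr (A : Set E) : List (Act E) → List (Act E)
  | [] => []
  | Sum.inl a :: tr => if a ∈ A then hideTr A tr else Sum.inl a :: hideTr A tr
  | Sum.inr a :: tr => Sum.inr a :: hideTr A tr

/-- The semantics of hiding: offers of hidden events are blocked and hidden events are
removed from the trace. -/
noncomputable def hideOp (A : Set E) (T : Set (List (Act E))) : Set (List (Act E)) :=
  {u | ∃ tr ∈ T, (∀ a ∈ A, (Sum.inr a : Act E) ∉ tr) ∧ u = hideTr A tr}

/-- Each of the operators `prefixA`, `timeoutOp`, `extchoice`, `par` and `hideOp` is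
Scott-continuous: it preserves unions of nonempty `⊆`-directed families of sets in each
argument separately (the other arguments being held fixed). -/
theorem operators_continuous (E : Type*) :
    (∀ (a : E) (F : Set (Set (List (Act E)))), F.Nonempty → DirectedOn (· ⊆ ·) F →
      prefixA a (⋃₀ F) = ⋃₀ ((fun T => prefixA a T) '' F)) ∧
    (∀ (U : Set (List (Act E))) (F : Set (Set (List (Act E)))), F.Nonempty →
      DirectedOn (· ⊆ ·) F →
      timeoutOp (⋃₀ F) U = ⋃₀ ((fun T => timeoutOp T U) '' F)) ∧
    (∀ (T : Set (List (Act E))) (F : Set (Set (List (Act E)))), F.Nonempty →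
      DirectedOn (· ⊆ ·) F →
      timeoutOp T (⋃₀ F) = ⋃₀ ((fun U => timeoutOp T U) '' F)) ∧
    (∀ (U : Set (List (Act E))) (F : Set (Set (List (Act E)))), F.Nonempty →
      DirectedOn (· ⊆ ·) F →
      extchoice (⋃₀ F) U = ⋃₀ ((fun T => extchoice T U) '' F)) ∧
    (∀ (T : Set (List (Act E))) (F : Set (Set (List (Act E)))), F.Nonempty →
      DirectedOn (· ⊆ ·) F →
      extchoice T (⋃₀ F) = ⋃₀ ((fun U => extchoice T U) '' F)) ∧
    (∀ (A B : Set E) (U : Set (List (Act E))) (F : Set (Set (List (Act E)))), F.Nonempty →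
      DirectedOn (· ⊆ ·) F →
      par A B (⋃₀ F) U = ⋃₀ ((fun T => par A B T U) '' F)) ∧
    (∀ (A B : Set E) (T : Set (List (Act E))) (F : Set (Set (List (Act E)))), F.Nonempty →
      DirectedOn (· ⊆ ·) F →
      par A B T (⋃₀ F) = ⋃₀ ((fun U => par A B T U) '' F)) ∧
    (∀ (A : Set E) (F : Set (Set (List (Act E)))), F.Nonempty → DirectedOn (· ⊆ ·) F →
      hideOp A (⋃₀ F) = ⋃₀ ((fun T => hideOp A T) '' F)) := by
  refine ⟨?_, ?_, ?_, ?_, ?_, ?_, ?_, ?_⟩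
  · rintro a F ⟨T0, hT0⟩ -
    ext u
    simp only [prefixA, Set.mem_union, Set.mem_setOf_eq, Set.mem_sUnion, Set.mem_image]
    constructor
    · rintro (h | ⟨s, t, hs, ⟨T, hT, htT⟩, rfl⟩)
      · exact ⟨_, ⟨T0, hT0, rfl⟩, Or.inl h⟩
      · exact ⟨_, ⟨T, hT, rfl⟩, Or.inr ⟨s, t, hs, htT, rfl⟩⟩
    · rintro ⟨_, ⟨T, hT, rfl⟩, h | ⟨s, t, hs, htT, rfl⟩⟩
      · exact Or.inl h
      · exact Or.inr ⟨s, t, hs, ⟨T, hT, htT⟩, rfl⟩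
  · rintro U F ⟨T0, hT0⟩ -
    ext v
    simp only [timeoutOp, Set.mem_union, Set.mem_setOf_eq, Set.mem_sUnion, Set.mem_image]
    constructor
    · rintro (⟨T, hT, hv⟩ | ⟨s, u, ⟨T, hT, hsT⟩, hne, huU, rfl⟩)
      · exact ⟨_, ⟨T, hT, rfl⟩, Or.inl hv⟩
      · exact ⟨_, ⟨T, hT, rfl⟩, Or.inr ⟨s, u, hsT, hne, huU, rfl⟩⟩
    · rintro ⟨_, ⟨T, hT, rfl⟩, hv | ⟨s, u, hsT, hne, huU, rfl⟩⟩
      · exact Or.inl ⟨T, hT, hv⟩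
      · exact Or.inr ⟨s, u, ⟨T, hT, hsT⟩, hne, huU, rfl⟩
  · rintro T F ⟨U0, hU0⟩ -
    ext v
    simp only [timeoutOp, Set.mem_union, Set.mem_setOf_eq, Set.mem_sUnion, Set.mem_image]
    constructor
    · rintro (hv | ⟨s, u, hsT, hne, ⟨U, hU, huU⟩, rfl⟩)
      · exact ⟨_, ⟨U0, hU0, rfl⟩, Or.inl hv⟩
      · exact ⟨_, ⟨U, hU, rfl⟩, Or.inr ⟨s, u, hsT, hne, huU, rfl⟩⟩
    · rintro ⟨_, ⟨U, hU, rfl⟩, hv | ⟨s, u, hsT, hne, huU, rfl⟩⟩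
      · exact Or.inl hv
      · exact Or.inr ⟨s, u, hsT, hne, ⟨U, hU, huU⟩, rfl⟩
  · rintro U F ⟨T0, hT0⟩ -
    ext v
    simp only [extchoice, Set.mem_union, Set.mem_setOf_eq, Set.mem_sUnion, Set.mem_image]
    constructor
    · rintro ((⟨s, ⟨T, hT, hsT⟩, t, htU, hns, hnt, hsh⟩ |
        ⟨a, s, s', t, tr, ⟨T, hT, hsT⟩, hns, htU, hnt, hsh, rfl⟩) |
        ⟨a, t, t', s, tr, htU, hnt, ⟨T, hT, hsT⟩, hns, hsh, rfl⟩)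
      · exact ⟨_, ⟨T, hT, rfl⟩, Or.inl (Or.inl ⟨s, hsT, t, htU, hns, hnt, hsh⟩)⟩
      · exact ⟨_, ⟨T, hT, rfl⟩, Or.inl (Or.inr ⟨a, s, s', t, tr, hsT, hns, htU, hnt, hsh, rfl⟩)⟩
      · exact ⟨_, ⟨T, hT, rfl⟩, Or.inr ⟨a, t, t', s, tr, htU, hnt, hsT, hns, hsh, rfl⟩⟩
    · rintro ⟨_, ⟨T, hT, rfl⟩, (⟨s, hsT, t, htU, hns, hnt, hsh⟩ |
        ⟨a, s, s', t, tr, hsT, hns, htU, hnt, hsh, rfl⟩) |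
        ⟨a, t, t', s, tr, htU, hnt, hsT, hns, hsh, rfl⟩⟩
      · exact Or.inl (Or.inl ⟨s, ⟨T, hT, hsT⟩, t, htU, hns, hnt, hsh⟩)
      · exact Or.inl (Or.inr ⟨a, s, s', t, tr, ⟨T, hT, hsT⟩, hns, htU, hnt, hsh, rfl⟩)
      · exact Or.inr ⟨a, t, t', s, tr, htU, hnt, ⟨T, hT, hsT⟩, hns, hsh, rfl⟩
  · rintro T F ⟨U0, hU0⟩ -
    ext v
    simp only [extchoice, Set.mem_union, Set.mem_setOf_eq, Set.mem_sUnion, Set.mem_image]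
    constructor
    · rintro ((⟨s, hsT, t, ⟨U, hU, htU⟩, hns, hnt, hsh⟩ |
        ⟨a, s, s', t, tr, hsT, hns, ⟨U, hU, htU⟩, hnt, hsh, rfl⟩) |
        ⟨a, t, t', s, tr, ⟨U, hU, htU⟩, hnt, hsT, hns, hsh, rfl⟩)
      · exact ⟨_, ⟨U, hU, rfl⟩, Or.inl (Or.inl ⟨s, hsT, t, htU, hns, hnt, hsh⟩)⟩
      · exact ⟨_, ⟨U, hU, rfl⟩, Or.inl (Or.inr ⟨a, s, s', t, tr, hsT, hns, htU, hnt, hsh, rfl⟩)⟩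
      · exact ⟨_, ⟨U, hU, rfl⟩, Or.inr ⟨a, t, t', s, tr, htU, hnt, hsT, hns, hsh, rfl⟩⟩
    · rintro ⟨_, ⟨U, hU, rfl⟩, (⟨s, hsT, t, htU, hns, hnt, hsh⟩ |
        ⟨a, s, s', t, tr, hsT, hns, htU, hnt, hsh, rfl⟩) |
        ⟨a, t, t', s, tr, htU, hnt, hsT, hns, hsh, rfl⟩⟩
      · exact Or.inl (Or.inl ⟨s, hsT, t, ⟨U, hU, htU⟩, hns, hnt, hsh⟩)
      · exact Or.inl (Or.inr ⟨a, s, s', t, tr, hsT, hns, ⟨U, hU, htU⟩, hnt, hsh, rfl⟩)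
      · exact Or.inr ⟨a, t, t', s, tr, ⟨U, hU, htU⟩, hnt, hsT, hns, hsh, rfl⟩
  · rintro A B U F ⟨T0, hT0⟩ -
    ext v
    simp only [par, Set.mem_setOf_eq, Set.mem_sUnion, Set.mem_image]
    constructor
    · rintro ⟨s, ⟨T, hT, hsT⟩, t, htU, hA, hB, hm⟩
      exact ⟨_, ⟨T, hT, rfl⟩, s, hsT, t, htU, hA, hB, hm⟩
    · rintro ⟨_, ⟨T, hT, rfl⟩, s, hsT, t, htU, hA, hB, hm⟩
      exact ⟨s, ⟨T, hT, hsT⟩, t, htU, hA, hB, hm⟩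
  · rintro A B T F ⟨U0, hU0⟩ -
    ext v
    simp only [par, Set.mem_setOf_eq, Set.mem_sUnion, Set.mem_image]
    constructor
    · rintro ⟨s, hsT, t, ⟨U, hU, htU⟩, hA, hB, hm⟩
      exact ⟨_, ⟨U, hU, rfl⟩, s, hsT, t, htU, hA, hB, hm⟩
    · rintro ⟨_, ⟨U, hU, rfl⟩, s, hsT, t, htU, hA, hB, hm⟩
      exact ⟨s, hsT, t, ⟨U, hU, htU⟩, hA, hB, hm⟩
  · rintro A F ⟨T0, hT0⟩ -
    ext u
    simp only [hideOp, Set.mem_setOf_eq, Set.mem_sUnion, Set.mem_image]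
    constructor
    · rintro ⟨tr, ⟨T, hT, htr⟩, hno, rfl⟩
      exact ⟨_, ⟨T, hT, rfl⟩, tr, htr, hno, rfl⟩
    · rintro ⟨_, ⟨T, hT, rfl⟩, tr, htr, hno, rfl⟩
      exact ⟨tr, ⟨T, hT, htr⟩, hno, rfl⟩
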